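/- Noninterference for faceted addition: define addition of faceted integers by fx + fy := bind fx (fun x => bind fy (fun y => ret (x + y))). For any label ℓ : L and faceted integers fx₀, fx₁, fy₀, fy₁ : Fac ℤ, if fx₀ ∼⟨ℓ⟩ fx₁ and fy₀ ∼⟨ℓ⟩ fy₁, then (fx₀ + fy₀) ∼⟨ℓ⟩ (fx₁ + fy₁). -/
import Mathlib


/-- Faceted values over labels `L` and payload type `A`. -/
inductive Fac (L : Type*) (A : Type*) where
  | ret : A → Fac L A
  | facet : L → Fac L A → Fac L A → Fac L A

section
variable {L : Type*} [PartialOrder L] [DecidableRel ((· ≤ ·) : L → L → Prop)]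

/-- Projection of a faceted value at an observer level. -/
def Fac.project {A : Type*} (ℓ : L) : Fac L A → A
  | .ret a => a
  | .facet ℓ' f₀ f₁ => if ℓ' ≤ ℓ then f₀.project ℓ else f₁.project ℓ

/-- Monadic bind for faceted values. -/
def Fac.bind {A B : Type*} : Fac L A → (A → Fac L B) → Fac L B
  | .ret a, c => c a
  | .facet ℓ' f₀ f₁, c => .facet ℓ' (f₀.bind c) (f₁.bind c)

/-- `ℓ`-equivalence of faceted values. -/
def FacEquiv {A : Type*} (ℓ : L) (f₀ f₁ : Fac L A) : Prop :=
  f₀.project ℓ = f₁.project ℓ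

/-- Addition of faceted integers. -/
instance : Add (Fac L ℤ) :=
  ⟨fun fx fy => fx.bind fun x => fy.bind fun y => Fac.ret (x + y)⟩

lemma project_bind {A B : Type*} (ℓ : L) (f : Fac L A) (c : A → Fac L B) :
    (f.bind c).project ℓ = (c (f.project ℓ)).project ℓ := by
  induction f with
  | ret a => rfl
  | facet ℓ' f₀ f₁ ih₀ ih₁ =>
      simp only [Fac.bind, Fac.project]
      split <;> simp [ih₀, ih₁]

/-- Noninterference for faceted addition. -/
theorem add_preserves_equiv (ℓ : L) (fx₀ fx₁ fy₀ fy₁ : Fac L ℤ)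
    (hx : FacEquiv ℓ fx₀ fx₁) (hy : FacEquiv ℓ fy₀ fy₁) :
    FacEquiv ℓ (fx₀ + fy₀) (fx₁ + fy₁) := by
  unfold FacEquiv at *
  show ((fx₀.bind fun x => fy₀.bind fun y => Fac.ret (x + y)).project ℓ) = _
  show _ = ((fx₁.bind fun x => fy₁.bind fun y => Fac.ret (x + y)).project ℓ)
  simp only [project_bind, hx, hy]

end
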